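/- Changing the divergence by ⟨e,·⟩ changes the generalized scalar curvature by R(𝒢, div + ⟨e,·⟩) − R(𝒢, div) = −|e|²_𝒢 − 2 div(𝒢e), where |e|²_𝒢 = ⟨𝒢e, e⟩. -/

import Mathlib

/-- Algebraic model of a Courant algebroid: the commutative ring `R` plays the
role of the smooth functions `C^∞(M)`, `E` plays the role of the module of
sections `Γ(E)`, and vector fields on `M` are modelled as `Derivation ℝ R R`.
The four axioms of Definition 2.1 are `jacobi`, `leibniz`, `invariance`,
`symmetrized`; `Dop` is the operator `𝒟 = ρ^T ∘ d`, characterized by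
`⟨𝒟 f, w⟩ = ρ(w) f`. -/
structure CourantAlgebroid (R : Type) [CommRing R] [Algebra ℝ R]
    (E : Type) [AddCommGroup E] [Module R E] : Type where
  bracket : E → E → E
  ip : E →ₗ[R] E →ₗ[R] R
  rho : E →ₗ[R] Derivation ℝ R R
  Dop : R → E
  ip_symm : ∀ u v, ip u v = ip v u
  ip_nondeg : ∀ u, (∀ v, ip u v = 0) → u = 0
  ip_Dop : ∀ f w, ip (Dop f) w = rho w f
  bracket_add_left : ∀ u v w, bracket (u + v) w = bracket u w + bracket v w
  bracket_add_right : ∀ u v w, bracket u (v + w) = bracket u v + bracket u w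
  jacobi : ∀ u v w, bracket u (bracket v w) = bracket (bracket u v) w + bracket v (bracket u w)
  leibniz : ∀ u (f : R) v, bracket u (f • v) = f • bracket u v + rho u f • v
  invariance : ∀ u v w, rho u (ip v w) = ip (bracket u v) w + ip v (bracket u w)
  symmetrized : ∀ u v, bracket u v + bracket v u = Dop (ip u v)

open Finset in
/-- The generalized scalar curvature `R(G, div)` of a generalized pseudometric
`G` and a divergence `dv`, computed in an admissible frame `b` with dual
frame `b'` via Lemma 4.13:
`R = −(div e_α)(div Ge^α) − 2ρ(e_α)(div Ge^α)
  + ¼ G^α_δ c_{αβγ} c^{δβγ} − 1/12 G^α_δ G^β_ε G^γ_ζ c_{αβγ} c^{δεζ}`,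
where `c(x,y,z) = ⟨[x,y], z⟩` are the structure functions. -/
noncomputable def gscal (R : Type) [CommRing R] [Algebra ℝ R]
    (E : Type) [AddCommGroup E] [Module R E] [Module ℝ E]
    (CA : CourantAlgebroid R E) (G : E →ₗ[R] E)
    (n : ℕ) (b b' : Fin n → E) (dv : E → R) : R :=
  - ∑ k, dv (b k) * dv (G (b' k))
  - 2 * ∑ k, CA.rho (b k) (dv (G (b' k)))
  + (1/4 : ℝ) • ∑ i, ∑ j, ∑ k,
      CA.ip (CA.bracket (b i) (b j)) (b k) *
        CA.ip (CA.bracket (G (b' i)) (b' j)) (b' k)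
  - (1/12 : ℝ) • ∑ i, ∑ j, ∑ k,
      CA.ip (CA.bracket (b i) (b j)) (b k) *
        CA.ip (CA.bracket (G (b' i)) (G (b' j))) (G (b' k))

/-! Only the two divergence terms of `gscal` see the divergence, so the change is
`−(X + Y + Σₖ ⟨e,bₖ⟩⟨e,G b'ₖ⟩) − 2W` with `X = Σₖ div(bₖ)⟨e,G b'ₖ⟩`, `Y = Σₖ ⟨e,bₖ⟩ div(G b'ₖ)`
and `W = Σₖ ρ(bₖ)⟨e,G b'ₖ⟩`. Expanding `Ge` in the frame, the Leibniz rule gives `X + W = div(Ge)`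
and the pairing gives `Σₖ ⟨e,bₖ⟩⟨e,G b'ₖ⟩ = ⟨Ge,e⟩`. Finally `Y = X`: in an adapted frame
`G b'ₖ = Σⱼ ηₖⱼ εⱼ bⱼ` with `ηε` symmetric, and the divergence is `ℝ`-linear because `ρ` kills
real constants. -/

theorem sum_mul_comm_of_isSymm {𝕜 ι M S : Type*} [CommSemiring 𝕜] [Fintype ι]
    [AddCommMonoid M] [Module 𝕜 M] [CommSemiring S] [Algebra 𝕜 S]
    (A : Matrix ι ι 𝕜) (hA : A.IsSymm) (b c : ι → M)
    (hc : ∀ k, c k = ∑ j, A k j • b j) (f g : M →ₗ[𝕜] S) :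
    ∑ k, f (b k) * g (c k) = ∑ k, f (c k) * g (b k) := by
  simp only [hc, map_sum, map_smul, Finset.mul_sum, Finset.sum_mul, mul_smul_comm,
    smul_mul_assoc]
  rw [Finset.sum_comm]
  exact Finset.sum_congr rfl fun k _ => Finset.sum_congr rfl fun j _ => by rw [hA.apply]

theorem Matrix.isSymm_mul_diagonal {ι α : Type*} [Fintype ι] [DecidableEq ι] [Semiring α]
    {η : Matrix ι ι α} (hη : η.IsSymm) {ε : ι → α} (hadapt : ∀ i j, ε i ≠ ε j → η i j = 0) :
    (η * Matrix.diagonal ε).IsSymm := by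
  refine Matrix.IsSymm.ext fun i j => ?_
  simp only [Matrix.mul_diagonal]
  by_cases hij : ε i = ε j
  · rw [hη.apply, hij]
  · rw [hadapt i j hij, hadapt j i (Ne.symm hij), zero_mul, zero_mul]

namespace CourantAlgebroid

variable {R E : Type} [CommRing R] [Algebra ℝ R] [AddCommGroup E] [Module R E]
  (CA : CourantAlgebroid R E)

open Finset in
theorem gscal_add_ip_sub [Module ℝ E] (G : E →ₗ[R] E) (n : ℕ) (b b' : Fin n → E)
    (dv : E → R) (e : E) :
    gscal R E CA G n b b' (fun u => dv u + CA.ip e u) - gscal R E CA G n b b' dv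
      = -(∑ k, dv (b k) * CA.ip e (G (b' k)) + ∑ k, CA.ip e (b k) * dv (G (b' k))
          + ∑ k, CA.ip e (b k) * CA.ip e (G (b' k)))
        - 2 * ∑ k, CA.rho (b k) (CA.ip e (G (b' k))) := by
  simp only [gscal, add_mul, mul_add, map_add, sum_add_distrib]
  ring

section Divergence

variable {CA} {dv : E → R}

theorem isLinearMap_real_of_leibniz [Module ℝ E] [IsScalarTower ℝ R E]
    (hdv_add : ∀ u v, dv (u + v) = dv u + dv v)
    (hdv_leibniz : ∀ (g : R) u, dv (g • u) = g * dv u + CA.rho u g) : IsLinearMap ℝ dv where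
  map_add := hdv_add
  map_smul a u := by
    rw [← algebraMap_smul R a u, hdv_leibniz, Derivation.map_algebraMap, add_zero,
      Algebra.smul_def]

theorem divergence_sum_smul (hdv_add : ∀ u v, dv (u + v) = dv u + dv v)
    (hdv_leibniz : ∀ (g : R) u, dv (g • u) = g * dv u + CA.rho u g)
    {ι : Type*} (s : Finset ι) (c : ι → R) (u : ι → E) :
    dv (∑ k ∈ s, c k • u k) = ∑ k ∈ s, (c k * dv (u k) + CA.rho (u k) (c k)) := by
  simpa only [AddMonoidHom.mk'_apply, hdv_leibniz] using
    map_sum (AddMonoidHom.mk' dv hdv_add) (fun k => c k • u k) s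

end Divergence

end CourantAlgebroid

theorem scalar_change_of_divergence_general
    (R : Type) [CommRing R] [Algebra ℝ R]
    (E : Type) [AddCommGroup E] [Module R E] [Module ℝ E] [IsScalarTower ℝ R E]
    (CA : CourantAlgebroid R E)
    (G : E →ₗ[R] E)
    (hGsym : ∀ x y, CA.ip (G x) y = CA.ip x (G y))
    (n : ℕ) (b b' : Fin n → E)
    (η : Fin n → Fin n → ℝ) (hηsym : ∀ i j, η i j = η j i)
    (hb' : ∀ i, b' i = ∑ j, η i j • b j)
    (ε : Fin n → ℝ)
    (hGb : ∀ k, G (b k) = ε k • b k)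
    (hηadapt : ∀ i j, ε i ≠ ε j → η i j = 0)
    (hrepr : ∀ x, ∑ k, CA.ip x (b' k) • b k = x)
    (dv : E → R)
    (hdv_add : ∀ u v, dv (u + v) = dv u + dv v)
    (hdv_leibniz : ∀ (g : R) u, dv (g • u) = g * dv u + CA.rho u g)
    (e : E) :
    gscal R E CA G n b b' (fun u => dv u + CA.ip e u)
      - gscal R E CA G n b b' dv
      = - CA.ip (G e) e - 2 * dv (G e) := by
  have hGb' : ∀ k, G (b' k) = ∑ j, (Matrix.of η * Matrix.diagonal ε) k j • b j := fun k => by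
    simp only [hb', map_sum, LinearMap.map_smul_of_tower, hGb, smul_smul, Matrix.mul_diagonal,
      Matrix.of_apply]
  have hsymm : (Matrix.of η * Matrix.diagonal ε).IsSymm :=
    Matrix.isSymm_mul_diagonal (Matrix.IsSymm.ext fun i j => hηsym j i) hηadapt
  have hcross : ∑ k, CA.ip e (b k) * dv (G (b' k)) = ∑ k, dv (b k) * CA.ip e (G (b' k)) := by
    have := sum_mul_comm_of_isSymm _ hsymm b _ hGb' ((CA.ip e).restrictScalars ℝ)
      (IsLinearMap.mk' dv (CourantAlgebroid.isLinearMap_real_of_leibniz hdv_add hdv_leibniz))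
    simpa only [LinearMap.coe_restrictScalars, IsLinearMap.mk'_apply, mul_comm] using this
  have hdiv : ∑ k, dv (b k) * CA.ip e (G (b' k)) + ∑ k, CA.rho (b k) (CA.ip e (G (b' k)))
      = dv (G e) := by
    conv_rhs => rw [← hrepr (G e)]
    rw [CourantAlgebroid.divergence_sum_smul hdv_add hdv_leibniz, Finset.sum_add_distrib]
    simp only [hGsym, mul_comm]
  have hnorm : ∑ k, CA.ip e (b k) * CA.ip e (G (b' k)) = CA.ip (G e) e := by
    conv_rhs => rw [CA.ip_symm, ← hrepr (G e)]
    simp only [map_sum, map_smul, smul_eq_mul, hGsym, mul_comm]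
  rw [CourantAlgebroid.gscal_add_ip_sub]
  linear_combination -hcross - 2 * hdiv - hnorm

/-- Proposition 4.14: changing the divergence by `⟨e,·⟩`
changes the generalized scalar curvature by
`R(G, div + ⟨e,·⟩) − R(G, div) = −|e|²_G − 2 div(Ge)`, where
`|e|²_G = ⟨Ge, e⟩`.  The admissible frame `b` (constant pairings) with dual
frame `b'` is encoded by: `b' i = Σ_j η i j • b j` with `η` symmetric real
constants, the frame is adapted to the splitting (`G(b k) = ε k • b k` with
`ε k = ±1`, `η` block-diagonal), and `b`, `b'` reproduce every section. -/
theorem scalar_change_of_divergence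
    (R : Type) [CommRing R] [Algebra ℝ R]
    (E : Type) [AddCommGroup E] [Module R E] [Module ℝ E] [IsScalarTower ℝ R E]
    (CA : CourantAlgebroid R E)
    (G : E →ₗ[R] E)
    (hGsym : ∀ x y, CA.ip (G x) y = CA.ip x (G y))
    (hGsq : ∀ x, G (G x) = x)
    (n : ℕ) (b b' : Fin n → E)
    (η : Fin n → Fin n → ℝ) (hηsym : ∀ i j, η i j = η j i)
    (hb' : ∀ i, b' i = ∑ j, η i j • b j)
    (ε : Fin n → ℝ) (hε : ∀ k, ε k = 1 ∨ ε k = -1)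
    (hGb : ∀ k, G (b k) = ε k • b k)
    (hηadapt : ∀ i j, ε i ≠ ε j → η i j = 0)
    (hrepr : ∀ x, ∑ k, CA.ip x (b' k) • b k = x)
    (dv : E → R)
    (hdv_add : ∀ u v, dv (u + v) = dv u + dv v)
    (hdv_leibniz : ∀ (g : R) u, dv (g • u) = g * dv u + CA.rho u g)
    (e : E) :
    gscal R E CA G n b b' (fun u => dv u + CA.ip e u)
      - gscal R E CA G n b b' dv
      = - CA.ip (G e) e - 2 * dv (G e) :=
  scalar_change_of_divergence_general R E CA G hGsym n b b' η hηsym hb' ε hGb hηadapt hrepr dv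
    hdv_add hdv_leibniz e
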